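/- In the abstract affects setting, let T be a conical poset, let O be injective (non-degenerate embedding), and suppose O satisfies compat with respect to A. If A(X,Y,Z) holds and is both Irred₁ and Irred₃, then F̄_s(Y) ⊆ F̄_s(X) ∩ F̄_s(Z). -/

import Mathlib

/-- The causal future `J⁺(t) = {t' : t ≤ t'}` of a point in a partially ordered set. -/
def Jplus {T : Type*} [PartialOrder T] (t : T) : Set T := {t' : T | t ≤ t'}

/-- The support future `F̄_s(W) = ⋂_{w ∈ W} J⁺(O w)` of a finite set of random
variable labels under an embedding `O` (with `F̄_s(∅) = T`). -/
def suppFuture {S T : Type*} [PartialOrder T] (O : S → T) (W : Finset S) : Set T :=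
  ⋂ w ∈ W, Jplus (O w)

/-- `X ⊨ Y|do(Z)` is Irred₁ (relative to the set of affects relations `A`) if for
every nonempty strict subset `s_X ⊊ X`, `A s_X Y ((X∖s_X) ∪ Z)` holds. -/
def Irred1 {S : Type*} [DecidableEq S] (A : Finset S → Finset S → Finset S → Prop)
    (X Y Z : Finset S) : Prop :=
  ∀ sX : Finset S, sX ⊆ X → sX.Nonempty → sX ≠ X → A sX Y ((X \ sX) ∪ Z)

/-- `X ⊨ Y|do(Z)` is Irred₃ (relative to `A`) if for every nonempty `s_Z ⊆ Z`,
`A s_Z Y (X ∪ (Z∖s_Z))` holds or `A s_Z Y (Z∖s_Z)` holds. -/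
def Irred3 {S : Type*} [DecidableEq S] (A : Finset S → Finset S → Finset S → Prop)
    (X Y Z : Finset S) : Prop :=
  ∀ sZ : Finset S, sZ ⊆ Z → sZ.Nonempty →
    (A sZ Y (X ∪ (Z \ sZ)) ∨ A sZ Y (Z \ sZ))

/-- The embedding `O` satisfies compat with respect to `A` if for every triple of
pairwise disjoint finite sets with `X, Y` nonempty such that `A X Y Z` holds and is
Irred₁, one has `F̄_s(Y ∪ Z) ⊆ F̄_s(X)`. -/
def Compat {S T : Type*} [DecidableEq S] [PartialOrder T]
    (A : Finset S → Finset S → Finset S → Prop) (O : S → T) : Prop :=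
  ∀ X Y Z : Finset S, Disjoint X Y → Disjoint X Z → Disjoint Y Z →
    X.Nonempty → Y.Nonempty → A X Y Z → Irred1 A X Y Z →
    suppFuture O (Y ∪ Z) ⊆ suppFuture O X

/-- The joint future `f(L) = ⋂_{p ∈ L} J⁺(p)` of a subset of a poset (with `f(∅) = T`). -/
def jointFuture {T : Type*} [PartialOrder T] (L : Set T) : Set T := ⋂ p ∈ L, Jplus p

/-- The spanning set `span(L)`: the union of all subsets `L' ⊆ L` with
`f(L') = f(L)` such that no strict subset `L'' ⊊ L'` satisfies `f(L'') = f(L)`. -/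
def spanS {T : Type*} [PartialOrder T] (L : Set T) : Set T :=
  {x : T | ∃ L' : Set T, L' ⊆ L ∧ x ∈ L' ∧ jointFuture L' = jointFuture L ∧
    ∀ L'' : Set T, L'' ⊂ L' → jointFuture L'' ≠ jointFuture L}

/-- A poset is conical if for all nonempty finite subsets `L₁, L₂`,
`f(L₁) = f(L₂)` implies `span(L₁) = span(L₂)`. -/
def Conical (T : Type*) [PartialOrder T] : Prop :=
  ∀ L₁ L₂ : Set T, L₁.Finite → L₂.Finite → L₁.Nonempty → L₂.Nonempty →
    jointFuture L₁ = jointFuture L₂ → spanS L₁ = spanS L₂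



/-!
Put `W = Y ∪ X ∪ Z`. For each `w ∈ X ∪ Z`, Irred₁ or Irred₃ yields a relation `{w} ⊨ Y | do(C)`
with `C ⊆ W ∖ {w}`, and compat applied to it gives `F̄_s(W ∖ {w}) ⊆ J⁺(O w)`: the point `O w`
can be dropped from `O(W)` without changing its joint future. Conicality then keeps `O w` out of
`span(O(W))`, so `span(O(W)) ⊆ O(Y)`; since a finite set has a minimal subset with the same joint
future, which lies in its span, `F̄_s(Y) ⊆ F̄_s(W) = F̄_s(X) ∩ F̄_s(Y) ∩ F̄_s(Z)`.
-/

section JointFuture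

variable {T : Type*} [PartialOrder T]

lemma jointFuture_anti {L L' : Set T} (h : L ⊆ L') : jointFuture L' ⊆ jointFuture L :=
  Set.biInter_subset_biInter_left h

lemma jointFuture_eq_inter_diff_singleton {L : Set T} {p : T} (hp : p ∈ L) :
    jointFuture L = Jplus p ∩ jointFuture (L \ {p}) := by
  rw [jointFuture, jointFuture, ← Set.biInter_insert, Set.insert_sdiff_singleton,
    Set.insert_eq_of_mem hp]

lemma spanS_subset (L : Set T) : spanS L ⊆ L := by
  rintro x ⟨L', hL', hx, -, -⟩
  exact hL' hx

lemma exists_minimal_jointFuture {L : Set T} (hL : L.Finite) :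
    ∃ L₀ ⊆ L, jointFuture L₀ = jointFuture L ∧
      ∀ L'' ⊂ L₀, jointFuture L'' ≠ jointFuture L := by
  let C := {L' : Set T | L' ⊆ L ∧ jointFuture L' = jointFuture L}
  have hCfin : C.Finite := hL.finite_subsets.subset fun _ hL' => hL'.1
  obtain ⟨L₀, ⟨hL₀L, hL₀eq⟩, hmin⟩ := hCfin.exists_minimal ⟨L, subset_rfl, rfl⟩
  refine ⟨L₀, hL₀L, hL₀eq, fun L'' hsub heq => hsub.ne ?_⟩
  exact hsub.subset.antisymm (hmin ⟨hsub.subset.trans hL₀L, heq⟩ hsub.subset)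

lemma jointFuture_spanS {L : Set T} (hL : L.Finite) : jointFuture (spanS L) = jointFuture L := by
  obtain ⟨L₀, hL₀L, hL₀eq, hL₀min⟩ := exists_minimal_jointFuture hL
  refine (jointFuture_anti (spanS_subset L)).antisymm' ?_
  calc jointFuture (spanS L) ⊆ jointFuture L₀ :=
        jointFuture_anti fun x hx => ⟨L₀, hL₀L, hx, hL₀eq, hL₀min⟩
    _ = jointFuture L := hL₀eq

lemma Conical.notMem_spanS (hT : Conical T) {L : Set T} (hL : L.Finite) {p : T}
    (hne : (L \ {p}).Nonempty) (hp : jointFuture (L \ {p}) = jointFuture L) :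
    p ∉ spanS L := by
  rw [← hT _ _ (hL.subset Set.sdiff_subset) hL hne (hne.mono Set.sdiff_subset) hp]
  exact fun h => (spanS_subset _ h).2 rfl

lemma Conical.jointFuture_subset_of_redundant (hT : Conical T) {L M : Set T} (hL : L.Finite)
    (hML : M ⊆ L) (hM : M.Nonempty)
    (hred : ∀ p ∈ L, p ∉ M → jointFuture (L \ {p}) ⊆ Jplus p) :
    jointFuture M ⊆ jointFuture L := by
  have hspan : spanS L ⊆ M := by
    intro p hp
    by_contra hpM
    have hpL := spanS_subset L hp
    refine hT.notMem_spanS hL (hM.mono fun x hx => ⟨hML hx, ?_⟩) ?_ hp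
    · rintro rfl
      exact hpM hx
    · rw [jointFuture_eq_inter_diff_singleton hpL, Set.inter_eq_right.2 (hred p hpL hpM)]
  exact (jointFuture_anti hspan).trans (jointFuture_spanS hL).subset

end JointFuture

section SuppFuture

variable {S T : Type*} [PartialOrder T]

lemma suppFuture_eq_jointFuture_image (O : S → T) (W : Finset S) :
    suppFuture O W = jointFuture (O '' W) := by
  rw [suppFuture, jointFuture, Set.biInter_image]
  rfl

lemma suppFuture_anti (O : S → T) {V W : Finset S} (h : V ⊆ W) :
    suppFuture O W ⊆ suppFuture O V :=
  Set.biInter_subset_biInter_left (Finset.coe_subset.2 h)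

@[simp]
lemma suppFuture_singleton (O : S → T) (w : S) : suppFuture O {w} = Jplus (O w) := by
  simp [suppFuture]

lemma suppFuture_union [DecidableEq S] (O : S → T) (V W : Finset S) :
    suppFuture O (V ∪ W) = suppFuture O V ∩ suppFuture O W :=
  Finset.set_biInter_inter V W _

lemma Conical.suppFuture_subset_of_redundant [DecidableEq S] (hT : Conical T) {O : S → T}
    (hO : Function.Injective O) {Y U : Finset S} (hY : Y.Nonempty)
    (hred : ∀ w ∈ U, suppFuture O ((Y ∪ U).erase w) ⊆ Jplus (O w)) :
    suppFuture O Y ⊆ suppFuture O U := by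
  suffices suppFuture O Y ⊆ suppFuture O (Y ∪ U) by
    rw [suppFuture_union] at this
    exact this.trans Set.inter_subset_right
  rw [suppFuture_eq_jointFuture_image, suppFuture_eq_jointFuture_image]
  refine hT.jointFuture_subset_of_redundant ((Y ∪ U).finite_toSet.image O)
    (Set.image_mono (Finset.coe_subset.2 Finset.subset_union_left)) ((Finset.coe_nonempty.2 hY).image O) ?_
  rintro _ ⟨w, hw, rfl⟩ hwY
  have hwU : w ∈ U := (Finset.mem_union.1 hw).resolve_left fun h => hwY ⟨w, h, rfl⟩
  rw [← Set.image_singleton, ← Set.image_sdiff hO, ← Finset.coe_singleton, ← Finset.coe_sdiff,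
    Finset.sdiff_singleton_eq_erase, ← suppFuture_eq_jointFuture_image]
  exact hred w hwU

end SuppFuture

section Affects

variable {S : Type*} [DecidableEq S] {A : Finset S → Finset S → Finset S → Prop}

lemma irred1_singleton (A : Finset S → Finset S → Finset S → Prop) (w : S) (Y Z : Finset S) :
    Irred1 A {w} Y Z := by
  intro sX hsub hne hne'
  rcases Finset.subset_singleton_iff.1 hsub with rfl | rfl
  · exact absurd rfl hne.ne_empty
  · exact absurd rfl hne'

lemma Irred1.affects_singleton {X Y Z : Finset S} (h1 : Irred1 A X Y Z) (hA : A X Y Z)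
    {w : S} (hw : w ∈ X) : A {w} Y (X.erase w ∪ Z) := by
  by_cases hX : {w} = X
  · subst hX
    simpa using hA
  · simpa [Finset.sdiff_singleton_eq_erase] using
      h1 {w} (Finset.singleton_subset_iff.2 hw) (Finset.singleton_nonempty w) hX

lemma Irred3.exists_affects_singleton {X Y Z : Finset S} (h3 : Irred3 A X Y Z) {w : S}
    (hw : w ∈ Z) : ∃ C ⊆ X ∪ Z.erase w, A {w} Y C := by
  rw [← Finset.sdiff_singleton_eq_erase]
  rcases h3 {w} (Finset.singleton_subset_iff.2 hw) (Finset.singleton_nonempty w) with h | h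
  · exact ⟨_, subset_rfl, h⟩
  · exact ⟨_, Finset.subset_union_right, h⟩

lemma exists_affects_singleton_of_irred {X Y Z : Finset S} (hXZ : Disjoint X Z)
    (hA : A X Y Z) (h1 : Irred1 A X Y Z) (h3 : Irred3 A X Y Z) {w : S} (hw : w ∈ X ∪ Z) :
    ∃ C ⊆ (X ∪ Z).erase w, A {w} Y C := by
  rw [Finset.erase_union_distrib]
  rcases Finset.mem_union.1 hw with hwX | hwZ
  · rw [Finset.erase_eq_of_notMem (Finset.disjoint_left.1 hXZ hwX)]
    exact ⟨_, subset_rfl, h1.affects_singleton hA hwX⟩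
  · rw [Finset.erase_eq_of_notMem (Finset.disjoint_right.1 hXZ hwZ)]
    exact h3.exists_affects_singleton hwZ

lemma Compat.suppFuture_subset_Jplus {T : Type*} [PartialOrder T] {O : S → T}
    (hc : Compat A O) {w : S} {Y C : Finset S} (hwY : w ∉ Y) (hwC : w ∉ C) (hYC : Disjoint Y C)
    (hY : Y.Nonempty) (hA : A {w} Y C) : suppFuture O (Y ∪ C) ⊆ Jplus (O w) := by
  simpa using hc {w} Y C (Finset.disjoint_singleton_left.2 hwY)
    (Finset.disjoint_singleton_left.2 hwC) hYC (Finset.singleton_nonempty w) hY hA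
    (irred1_singleton A w Y C)

end Affects

theorem compat_conical_irred1_irred3_general {S T : Type*} [DecidableEq S] [PartialOrder T]
    (A : Finset S → Finset S → Finset S → Prop) (O : S → T)
    (hT : Conical T) (hO : Function.Injective O) (hc : Compat A O)
    (X Y Z : Finset S)
    (hXY : Disjoint X Y) (hXZ : Disjoint X Z) (hYZ : Disjoint Y Z)
    (hY : Y.Nonempty)
    (hA : A X Y Z) (h1 : Irred1 A X Y Z) (h3 : Irred3 A X Y Z) :
    suppFuture O Y ⊆ suppFuture O X ∩ suppFuture O Z := by
  have hYU : Disjoint Y (X ∪ Z) := Finset.disjoint_union_right.2 ⟨hXY.symm, hYZ⟩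
  have hred : ∀ w ∈ X ∪ Z, suppFuture O ((Y ∪ (X ∪ Z)).erase w) ⊆ Jplus (O w) := by
    intro w hw
    obtain ⟨C, hCU, hAC⟩ := exists_affects_singleton_of_irred hXZ hA h1 h3 hw
    have hwY : w ∉ Y := Finset.disjoint_right.1 hYU hw
    have hYC : Disjoint Y C := hYU.mono_right (hCU.trans (Finset.erase_subset _ _))
    have hsub : Y ∪ C ⊆ (Y ∪ (X ∪ Z)).erase w := by
      rw [Finset.erase_union_distrib, Finset.erase_eq_of_notMem hwY]
      exact Finset.union_subset_union subset_rfl hCU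
    exact (suppFuture_anti O hsub).trans
      (hc.suppFuture_subset_Jplus hwY (fun h => Finset.notMem_erase w _ (hCU h)) hYC hY hAC)
  rw [← suppFuture_union]
  exact hT.suppFuture_subset_of_redundant hO hY hred

/-- In a conical space-time with a non-degenerate (injective) compatible embedding,
an affects relation `A X Y Z` that is both Irred₁ and Irred₃ satisfies
`F̄_s(Y) ⊆ F̄_s(X) ∩ F̄_s(Z)`. -/
theorem compat_conical_irred1_irred3 {S T : Type*} [DecidableEq S] [PartialOrder T]
    (A : Finset S → Finset S → Finset S → Prop) (O : S → T)
    (hT : Conical T) (hO : Function.Injective O) (hc : Compat A O)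
    (X Y Z : Finset S)
    (hXY : Disjoint X Y) (hXZ : Disjoint X Z) (hYZ : Disjoint Y Z)
    (hX : X.Nonempty) (hY : Y.Nonempty)
    (hA : A X Y Z) (h1 : Irred1 A X Y Z) (h3 : Irred3 A X Y Z) :
    suppFuture O Y ⊆ suppFuture O X ∩ suppFuture O Z :=
  compat_conical_irred1_irred3_general A O hT hO hc X Y Z hXY hXZ hYZ hY hA h1 h3
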